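/- arXiv:1810.03930 — 2 statements merged into one kernel-verified Lean document; each statement's English description precedes it below -/
import Mathlib

section
/- Let f : ℝ^{n×p} → ℝ be continuously differentiable, let X ∈ ℝ^{n×p} satisfy σ_min(X) > 0, let δ > 0, and suppose β > (‖∇f(X)‖₂·‖X‖₂ + δ)/σ_min(X)². If ∇_X L_β(X, Λ) = 0 with Λ = Ψ(∇f(X)ᵀX), then X is a first-order stationary point of problem (P), i.e. XᵀX = I_p and ∇f(X) − X∇f(X)ᵀX = 0. -/
open Matrix

attribute [local instance] Matrix.frobeniusNormedAddCommGroup Matrix.frobeniusNormedSpace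

/-- Spectral norm (largest singular value) of a real matrix. -/
noncomputable def specNorm {n p : ℕ} (A : Matrix (Fin n) (Fin p) ℝ) : ℝ :=
  ⨆ v : Metric.sphere (0 : EuclideanSpace ℝ (Fin p)) 1, ‖Matrix.toEuclideanLin A v.1‖

/-- Smallest singular value of a real matrix. -/
noncomputable def sigmaMin {n p : ℕ} (A : Matrix (Fin n) (Fin p) ℝ) : ℝ :=
  ⨅ v : Metric.sphere (0 : EuclideanSpace ℝ (Fin p)) 1, ‖Matrix.toEuclideanLin A v.1‖

/-!
Write `C = XᵀX - 1` and `Λ = Ψ(GᵀX)`, so that the stationarity equation reads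
`G - XΛ + βXC = 0`. Multiplying it on the left by `CXᵀ` and taking traces, the symmetry of `C`
gives `tr (C (βXᵀX - Λ) C) = 0`. The bound on `β` makes `βXᵀX - Λ` positive definite, because
`vᵀ(βXᵀX - Λ)v ≥ β‖Xv‖² - ‖Gv‖‖Xv‖ ≥ (β σ_min(X)² - ‖G‖₂‖X‖₂)‖v‖²`; hence `C = 0`.
Then `G = XΛ` with `Λ` symmetric, so `GᵀX = Λ XᵀX = Λ` and `G = XGᵀX`.
-/

namespace Matrix

lemma dotProduct_transpose_mul_mulVec {m k R : Type*} [Fintype m] [Fintype k] [CommSemiring R]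
    (A B : Matrix m k R) (x : k → R) : x ⬝ᵥ ((Aᵀ * B) *ᵥ x) = (A *ᵥ x) ⬝ᵥ (B *ᵥ x) := by
  rw [← mulVec_mulVec, dotProduct_transpose_mulVec, dotProduct_comm]

lemma diag_conjTranspose_mul_mul {m n R : Type*} [Fintype m] [NonUnitalSemiring R] [StarRing R]
    (A : Matrix m m R) (C : Matrix m n R) (j : n) :
    (Cᴴ * A * C) j j = star (Cᵀ j) ⬝ᵥ (A *ᵥ Cᵀ j) := by
  rw [Matrix.mul_assoc, mul_apply']
  rfl

variable {m n R : Type*} [Fintype m] [Fintype n] [CommRing R] [PartialOrder R] [StarRing R]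
  [StarOrderedRing R]

lemma PosDef.eq_zero_of_trace_conjTranspose_mul_mul_eq_zero {A : Matrix m m R} (hA : A.PosDef)
    {C : Matrix m n R} (hC : (Cᴴ * A * C).trace = 0) : C = 0 := by
  have hdiag := (Finset.sum_eq_zero_iff_of_nonneg fun j _ =>
    (hA.posSemidef.conjTranspose_mul_mul_same C).diag_nonneg).1 hC
  ext i j
  by_contra hij
  have hcol : Cᵀ j ≠ 0 := fun h => hij (congrFun h i)
  have := hA.dotProduct_mulVec_pos hcol
  rw [← diag_conjTranspose_mul_mul, hdiag j (Finset.mem_univ j)] at this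
  exact this.false

end Matrix

/-- The paper's `Ψ`. -/
noncomputable def symmPart {k : Type*} (A : Matrix k k ℝ) : Matrix k k ℝ := (1 / 2 : ℝ) • (A + Aᵀ)

lemma transpose_symmPart {k : Type*} (A : Matrix k k ℝ) : (symmPart A)ᵀ = symmPart A := by
  rw [symmPart, transpose_smul, transpose_add, transpose_transpose, add_comm]

section SingularValues

variable {n p : ℕ} (A : Matrix (Fin n) (Fin p) ℝ)

lemma specNorm_nonneg : 0 ≤ specNorm A :=
  Real.iSup_nonneg fun _ => norm_nonneg _

lemma sigmaMin_nonneg : 0 ≤ sigmaMin A :=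
  Real.iInf_nonneg fun _ => norm_nonneg _

lemma norm_toEuclideanLin_eq_norm_mul {v : EuclideanSpace ℝ (Fin p)} (hv : v ≠ 0) :
    ‖toEuclideanLin A v‖ = ‖v‖ * ‖toEuclideanLin A (‖v‖⁻¹ • v)‖ := by
  rw [map_smul, norm_smul, norm_inv, norm_norm, mul_inv_cancel_left₀ (norm_ne_zero_iff.2 hv)]

lemma sigmaMin_mul_norm_le (v : EuclideanSpace ℝ (Fin p)) :
    sigmaMin A * ‖v‖ ≤ ‖toEuclideanLin A v‖ := by
  rcases eq_or_ne v 0 with rfl | hv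
  · simp
  have hbdd : BddBelow (Set.range fun u : Metric.sphere (0 : EuclideanSpace ℝ (Fin p)) 1 =>
      ‖toEuclideanLin A u.1‖) := ⟨0, by rintro _ ⟨u, rfl⟩; exact norm_nonneg _⟩
  have hle := ciInf_le hbdd ⟨‖v‖⁻¹ • v, mem_sphere_zero_iff_norm.2 (norm_smul_inv_norm hv)⟩
  rw [norm_toEuclideanLin_eq_norm_mul A hv, mul_comm]
  exact mul_le_mul_of_nonneg_left hle (norm_nonneg v)

lemma norm_toEuclideanLin_le_specNorm_mul (v : EuclideanSpace ℝ (Fin p)) :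
    ‖toEuclideanLin A v‖ ≤ specNorm A * ‖v‖ := by
  rcases eq_or_ne v 0 with rfl | hv
  · simp
  have hbdd : BddAbove (Set.range fun u : Metric.sphere (0 : EuclideanSpace ℝ (Fin p)) 1 =>
      ‖toEuclideanLin A u.1‖) := by
    simpa only [Set.image_eq_range] using
      (isCompact_sphere (0 : EuclideanSpace ℝ (Fin p)) 1).bddAbove_image
        (LinearMap.continuous_of_finiteDimensional (toEuclideanLin A)).norm.continuousOn
  have hle := le_ciSup hbdd ⟨‖v‖⁻¹ • v, mem_sphere_zero_iff_norm.2 (norm_smul_inv_norm hv)⟩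
  rw [norm_toEuclideanLin_eq_norm_mul A hv, mul_comm _ ‖v‖]
  exact mul_le_mul_of_nonneg_left hle (norm_nonneg v)

end SingularValues

lemma posDef_smul_transpose_mul_self_sub {n p : ℕ} (X G : Matrix (Fin n) (Fin p) ℝ) {β : ℝ}
    (hβ : specNorm G * specNorm X < β * sigmaMin X ^ 2) :
    (β • (Xᵀ * X) - symmPart (Gᵀ * X)).PosDef := by
  refine .of_dotProduct_mulVec_pos ?_ fun x hx => ?_
  · rw [IsHermitian, conjTranspose_eq_transpose_of_trivial, transpose_sub, transpose_smul,
      transpose_mul, transpose_transpose, transpose_symmPart]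
  set v : EuclideanSpace ℝ (Fin p) := WithLp.toLp 2 x
  have hv : 0 < ‖v‖ := norm_pos_iff.2 (by simpa [v] using hx)
  have hquad : star x ⬝ᵥ ((β • (Xᵀ * X) - symmPart (Gᵀ * X)) *ᵥ x)
      = β * ‖toEuclideanLin X v‖ ^ 2 - inner ℝ (toEuclideanLin G v) (toEuclideanLin X v) := by
    rw [symmPart, star_trivial, sub_mulVec, dotProduct_sub, smul_mulVec, dotProduct_smul,
      smul_mulVec, dotProduct_smul, add_mulVec, dotProduct_add, transpose_mul, transpose_transpose,
      dotProduct_transpose_mul_mulVec, dotProduct_transpose_mul_mulVec,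
      dotProduct_transpose_mul_mulVec, ← real_inner_self_eq_norm_sq, EuclideanSpace.inner_eq_star_dotProduct,
      EuclideanSpace.inner_eq_star_dotProduct]
    simp only [toLpLin_apply, v, star_trivial, smul_eq_mul, dotProduct_comm (X *ᵥ x)]
    ring
  have hCS : inner ℝ (toEuclideanLin G v) (toEuclideanLin X v)
      ≤ specNorm G * specNorm X * ‖v‖ ^ 2 :=
    calc _ ≤ ‖toEuclideanLin G v‖ * ‖toEuclideanLin X v‖ := real_inner_le_norm _ _
      _ ≤ (specNorm G * ‖v‖) * (specNorm X * ‖v‖) :=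
        mul_le_mul (norm_toEuclideanLin_le_specNorm_mul G v)
          (norm_toEuclideanLin_le_specNorm_mul X v) (norm_nonneg _)
          (mul_nonneg (specNorm_nonneg G) hv.le)
      _ = _ := by ring
  have hβpos : 0 < β := by
    have := mul_nonneg (specNorm_nonneg G) (specNorm_nonneg X)
    exact pos_of_mul_pos_left (this.trans_lt hβ) (sq_nonneg _)
  have hσ : β * (sigmaMin X ^ 2 * ‖v‖ ^ 2) ≤ β * ‖toEuclideanLin X v‖ ^ 2 := by
    rw [← mul_pow]
    exact mul_le_mul_of_nonneg_left (pow_le_pow_left₀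
      (mul_nonneg (sigmaMin_nonneg X) hv.le) (sigmaMin_mul_norm_le X v) 2) hβpos.le
  rw [hquad]
  linarith [mul_lt_mul_of_pos_right hβ (pow_pos hv 2)]

lemma trace_conj_eq_zero_of_augLagrangian_grad_eq_zero {m k : Type*} [Fintype m] [Fintype k]
    [DecidableEq k] {X G : Matrix m k ℝ} {β : ℝ}
    (h : G - X * symmPart (Gᵀ * X) + β • (X * (Xᵀ * X - 1)) = 0) :
    ((Xᵀ * X - 1) * (β • (Xᵀ * X) - symmPart (Gᵀ * X)) * (Xᵀ * X - 1)).trace = 0 := by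
  set C := Xᵀ * X - 1 with hC
  set Λ := symmPart (Gᵀ * X) with hΛ
  have hCsymm : Cᵀ = C := by simp [hC, transpose_sub, transpose_mul]
  have hXC : X * (β • C) = X * Λ - G := by
    rw [Matrix.mul_smul, ← sub_eq_zero, ← h]; abel
  have hquad : β * (C * (Xᵀ * X) * C).trace = (C * Xᵀ * X * Λ).trace - (C * Xᵀ * G).trace := by
    have := congrArg (fun Y => (C * Xᵀ * Y).trace) hXC
    simpa only [Matrix.mul_smul, trace_smul, smul_eq_mul, Matrix.mul_sub, trace_sub,
      Matrix.mul_assoc] using this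
  have hcycle : (C * Xᵀ * X * Λ).trace = (C * Λ * C).trace + (C * Λ).trace := by
    have hM : Xᵀ * X = C + 1 := by rw [hC, sub_add_cancel]
    rw [Matrix.mul_assoc C Xᵀ X, hM, Matrix.mul_add, Matrix.add_mul, Matrix.mul_one, trace_add,
      trace_mul_cycle C Λ C]
  have hsymm : (C * Λ).trace = (C * Xᵀ * G).trace := by
    have : (C * (Gᵀ * X)).trace = (C * Xᵀ * G).trace := by
      rw [← trace_transpose, transpose_mul, hCsymm, transpose_mul, transpose_transpose,
        trace_mul_comm, Matrix.mul_assoc]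
    rw [hΛ, symmPart, Matrix.mul_smul, trace_smul, Matrix.mul_add, trace_add, this, transpose_mul,
      transpose_transpose, ← Matrix.mul_assoc, smul_eq_mul]
    ring
  have hexpand : (C * (β • (Xᵀ * X) - Λ) * C).trace
      = β * (C * (Xᵀ * X) * C).trace - (C * Λ * C).trace := by
    simp only [Matrix.mul_sub, Matrix.sub_mul, Matrix.mul_smul, Matrix.smul_mul, trace_sub,
      trace_smul, smul_eq_mul]
  linarith

theorem stmt5_general {n p : ℕ}
    (X G : Matrix (Fin n) (Fin p) ℝ)
    (δ β : ℝ) (hδ : 0 < δ)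
    (hσ : 0 < sigmaMin X)
    (hβ : β > (specNorm G * specNorm X + δ) / (sigmaMin X) ^ 2)
    (hzero : G - X * ((1 / 2 : ℝ) • (Gᵀ * X + (Gᵀ * X)ᵀ)) + β • (X * (Xᵀ * X - 1)) = 0) :
    Xᵀ * X = 1 ∧ G - X * Gᵀ * X = 0 := by
  have hβ' : specNorm G * specNorm X < β * sigmaMin X ^ 2 := by
    rw [gt_iff_lt, div_lt_iff₀ (pow_pos hσ 2)] at hβ
    linarith
  have hC : Xᵀ * X - 1 = 0 := by
    refine (posDef_smul_transpose_mul_self_sub X G hβ')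
      |>.eq_zero_of_trace_conjTranspose_mul_mul_eq_zero ?_
    rw [conjTranspose_eq_transpose_of_trivial, transpose_sub, transpose_mul, transpose_transpose,
      transpose_one]
    exact trace_conj_eq_zero_of_augLagrangian_grad_eq_zero hzero
  have hXX : Xᵀ * X = 1 := sub_eq_zero.1 hC
  refine ⟨hXX, ?_⟩
  change G - X * symmPart (Gᵀ * X) + _ = 0 at hzero
  rw [hC, Matrix.mul_zero, smul_zero, add_zero, sub_eq_zero] at hzero
  have hGX : Gᵀ * X = symmPart (Gᵀ * X) := by
    nth_rw 1 [hzero]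
    rw [transpose_mul, transpose_symmPart, Matrix.mul_assoc, hXX, Matrix.mul_one]
  rw [Matrix.mul_assoc, hGX, ← hzero, sub_self]

/-- Lemma 2 of the paper, second part: if `σ_min(X) > 0`, `δ > 0`,
`β > (‖∇f(X)‖₂‖X‖₂ + δ)/σ_min(X)²` and `∇_X L_β(X, Λ) = 0` with `Λ = Ψ(∇f(X)ᵀX)`,
then `X` is a first-order stationary point of problem (P):
`XᵀX = I_p` and `∇f(X) − X∇f(X)ᵀX = 0`. -/
theorem stmt5 {n p : ℕ} (f : Matrix (Fin n) (Fin p) ℝ → ℝ)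
    (hf : ContDiff ℝ 1 f)
    (X G : Matrix (Fin n) (Fin p) ℝ)
    (hG : ∀ H, fderiv ℝ f X H = Matrix.trace (Gᵀ * H))
    (δ β : ℝ) (hδ : 0 < δ)
    (hσ : 0 < sigmaMin X)
    (hβ : β > (specNorm G * specNorm X + δ) / (sigmaMin X) ^ 2)
    (hzero : G - X * ((1 / 2 : ℝ) • (Gᵀ * X + (Gᵀ * X)ᵀ)) + β • (X * (Xᵀ * X - 1)) = 0) :
    Xᵀ * X = 1 ∧ G - X * Gᵀ * X = 0 :=
  stmt5_general X G δ β hδ hσ hβ hzero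
end

section
/- Let f : ℝ^{n×p} → ℝ be twice continuously differentiable, let X⁰ ∈ ℝ^{n×p} satisfy Assumption A2 with σ̲ ∈ (0,1), and suppose the parameters β, c₁, c₂ and the stepsizes η^k satisfy Assumption A3. Then the PLAM iterates X^{k+1} = X^k − (1/η^k)·(∇f(X^k) − X^kΨ(∇f(X^k)ᵀX^k) + βX^k(X^kᵀX^k − I_p)) satisfy, for every k ≥ 0, σ_min(X^k) ≥ σ̲ and ‖X^kᵀX^k − I_p‖_F ≤ R. -/
/-!
Write `S = XᵀX - I`, `Λ = Ψ(∇f(X)ᵀX)` and `D = ∇_X L_β(X, Λ)`. Since `Λ` is the symmetric part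
of `∇f(X)ᵀX`, the first-order gradient terms cancel in one PLAM step with `t = 1/η`, leaving
`X⁺ᵀX⁺ - I = (1 - 2tβ) S - 2tβ S² + t (SΛ + ΛS) + t² DᵀD`. On `C` the spectral norm of `X` is at
most `M` and `‖∇f(X)‖_F ≤ N`, so `‖Λ‖_F ≤ MN` and `‖D‖_F ≤ N_L`. Assumption A3 makes
`2tβ ≤ 1` and `t N_L² ≤ 2R(β(1 - R) - MN)`, and with these `‖S‖_F ≤ R` implies
`‖X⁺ᵀX⁺ - I‖_F ≤ R`. Finally `‖Xv‖² ≥ (1 - ‖S‖_F)‖v‖² ≥ σ̲²‖v‖²` by Assumption A2.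
-/

open Matrix Filter

attribute [local instance] Matrix.frobeniusNormedAddCommGroup Matrix.frobeniusNormedSpace

section SpectralNorm

variable {m n k : ℕ}

lemma specNorm_eq_opNorm (A : Matrix (Fin m) (Fin n) ℝ) :
    specNorm A = ‖LinearMap.toContinuousLinearMap (toEuclideanLin A)‖ := by
  rw [specNorm, ← ContinuousLinearMap.sSup_sphere_eq_norm, sSup_image']
  rfl

lemma specNorm_nonneg_s9 (A : Matrix (Fin m) (Fin n) ℝ) : 0 ≤ specNorm A :=
  specNorm_eq_opNorm A ▸ norm_nonneg _

lemma norm_toEuclideanLin_le (A : Matrix (Fin m) (Fin n) ℝ) (v : EuclideanSpace ℝ (Fin n)) :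
    ‖toEuclideanLin A v‖ ≤ specNorm A * ‖v‖ := by
  rw [specNorm_eq_opNorm]
  exact (LinearMap.toContinuousLinearMap (toEuclideanLin A)).le_opNorm v

lemma specNorm_transpose (A : Matrix (Fin m) (Fin n) ℝ) : specNorm Aᵀ = specNorm A := by
  rw [specNorm_eq_opNorm, specNorm_eq_opNorm, ← conjTranspose_eq_transpose_of_trivial,
    toEuclideanLin_conjTranspose_eq_adjoint, LinearMap.adjoint_toContinuousLinearMap,
    ContinuousLinearMap.adjoint.norm_map]

lemma frobenius_norm_sq_eq_sum_col (B : Matrix (Fin m) (Fin n) ℝ) :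
    ‖B‖ ^ 2 = ∑ j, ‖WithLp.toLp 2 (fun i => B i j)‖ ^ 2 := by
  simp only [EuclideanSpace.norm_sq_eq, frobenius_norm_def]
  rw [← Real.sqrt_eq_rpow, Real.sq_sqrt (by positivity), Finset.sum_comm]
  simp

lemma frobenius_norm_mul_le_specNorm_mul (A : Matrix (Fin m) (Fin n) ℝ)
    (B : Matrix (Fin n) (Fin k) ℝ) : ‖A * B‖ ≤ specNorm A * ‖B‖ := by
  refine le_of_sq_le_sq ?_ (mul_nonneg (specNorm_nonneg_s9 A) (norm_nonneg B))
  rw [mul_pow, frobenius_norm_sq_eq_sum_col, frobenius_norm_sq_eq_sum_col, Finset.mul_sum]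
  gcongr with j
  rw [← mul_pow]
  gcongr
  exact norm_toEuclideanLin_le A (WithLp.toLp 2 fun i => B i j)

lemma frobenius_norm_mul_le_mul_specNorm (B : Matrix (Fin k) (Fin m) ℝ)
    (A : Matrix (Fin m) (Fin n) ℝ) : ‖B * A‖ ≤ ‖B‖ * specNorm A := by
  rw [← frobenius_norm_transpose, transpose_mul, ← specNorm_transpose, mul_comm,
    ← frobenius_norm_transpose B]
  exact frobenius_norm_mul_le_specNorm_mul Aᵀ Bᵀ

lemma specNorm_le_frobenius_norm (A : Matrix (Fin m) (Fin n) ℝ) : specNorm A ≤ ‖A‖ := by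
  rw [specNorm_eq_opNorm]
  refine ContinuousLinearMap.opNorm_le_bound _ (norm_nonneg A) fun v => ?_
  calc ‖toEuclideanLin A v‖ = ‖replicateCol (Fin 1) (A *ᵥ WithLp.ofLp v)‖ :=
        (frobenius_norm_replicateCol _).symm
    _ ≤ ‖A‖ * ‖replicateCol (Fin 1) (WithLp.ofLp v)‖ :=
        replicateCol_mulVec A _ ▸ frobenius_norm_mul _ _
    _ = ‖A‖ * ‖v‖ := congrArg (‖A‖ * ·) (frobenius_norm_replicateCol _)

lemma abs_norm_sq_toEuclideanLin_sub_le (Z : Matrix (Fin m) (Fin n) ℝ)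
    (v : EuclideanSpace ℝ (Fin n)) :
    |‖toEuclideanLin Z v‖ ^ 2 - ‖v‖ ^ 2| ≤ ‖Zᵀ * Z - 1‖ * ‖v‖ ^ 2 := by
  have hquad : ‖toEuclideanLin Z v‖ ^ 2 - ‖v‖ ^ 2 = inner ℝ v (toEuclideanLin (Zᵀ * Z - 1) v) := by
    rw [map_sub, toLpLin_mul_same, toLpLin_one, ← conjTranspose_eq_transpose_of_trivial,
      toEuclideanLin_conjTranspose_eq_adjoint]
    simp only [LinearMap.sub_apply, LinearMap.comp_apply, LinearMap.id_apply, inner_sub_right,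
      LinearMap.adjoint_inner_right, real_inner_self_eq_norm_sq]
  calc |‖toEuclideanLin Z v‖ ^ 2 - ‖v‖ ^ 2|
      ≤ ‖v‖ * ‖toEuclideanLin (Zᵀ * Z - 1) v‖ := hquad ▸ abs_real_inner_le_norm _ _
    _ ≤ ‖v‖ * (‖Zᵀ * Z - 1‖ * ‖v‖) := by
        gcongr
        exact (norm_toEuclideanLin_le _ v).trans
          (mul_le_mul_of_nonneg_right (specNorm_le_frobenius_norm _) (norm_nonneg v))
    _ = ‖Zᵀ * Z - 1‖ * ‖v‖ ^ 2 := by ring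

end SpectralNorm

section ConstraintSet

variable {m n : ℕ} {R : ℝ} {Z : Matrix (Fin m) (Fin n) ℝ}

lemma norm_toEuclideanLin_le_sqrt_one_add_mul (hZ : ‖Zᵀ * Z - 1‖ ≤ R)
    (v : EuclideanSpace ℝ (Fin n)) : ‖toEuclideanLin Z v‖ ≤ √(1 + R) * ‖v‖ := by
  have h := (abs_le.mp (abs_norm_sq_toEuclideanLin_sub_le Z v)).2
  rw [← Real.sqrt_sq (norm_nonneg (toEuclideanLin Z v)), ← Real.sqrt_sq (norm_nonneg v),
    ← Real.sqrt_mul' _ (by positivity)]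
  gcongr
  nlinarith [sq_nonneg ‖v‖]

lemma sqrt_one_sub_mul_le_norm_toEuclideanLin (hZ : ‖Zᵀ * Z - 1‖ ≤ R)
    (v : EuclideanSpace ℝ (Fin n)) : √(1 - R) * ‖v‖ ≤ ‖toEuclideanLin Z v‖ := by
  have h := (abs_le.mp (abs_norm_sq_toEuclideanLin_sub_le Z v)).1
  rw [← Real.sqrt_sq (norm_nonneg (toEuclideanLin Z v)), ← Real.sqrt_sq (norm_nonneg v),
    ← Real.sqrt_mul' _ (by positivity)]
  gcongr
  nlinarith [sq_nonneg ‖v‖]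

lemma specNorm_le_sqrt_one_add (hZ : ‖Zᵀ * Z - 1‖ ≤ R) : specNorm Z ≤ √(1 + R) := by
  rw [specNorm_eq_opNorm]
  exact ContinuousLinearMap.opNorm_le_bound _ (Real.sqrt_nonneg _)
    (norm_toEuclideanLin_le_sqrt_one_add_mul hZ)

lemma sqrt_one_sub_le_sigmaMin [NeZero n] (hZ : ‖Zᵀ * Z - 1‖ ≤ R) :
    √(1 - R) ≤ sigmaMin Z := by
  have := (NormedSpace.sphere_nonempty.mpr zero_le_one :
    (Metric.sphere (0 : EuclideanSpace ℝ (Fin n)) 1).Nonempty).to_subtype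
  refine le_ciInf fun v => ?_
  simpa [norm_eq_of_mem_sphere v] using sqrt_one_sub_mul_le_norm_toEuclideanLin hZ v.1

lemma sqrt_one_sub_le_specNorm [NeZero n] (hZ : ‖Zᵀ * Z - 1‖ ≤ R) :
    √(1 - R) ≤ specNorm Z := by
  obtain ⟨v, hv⟩ : (Metric.sphere (0 : EuclideanSpace ℝ (Fin n)) 1).Nonempty :=
    NormedSpace.sphere_nonempty.mpr zero_le_one
  simpa [norm_eq_of_mem_sphere ⟨v, hv⟩] using
    (sqrt_one_sub_mul_le_norm_toEuclideanLin hZ v).trans (norm_toEuclideanLin_le Z v)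

lemma isCompact_setOf_norm_transpose_mul_self_sub_one_le :
    IsCompact {Z : Matrix (Fin m) (Fin n) ℝ | ‖Zᵀ * Z - 1‖ ≤ R} := by
  refine Metric.isCompact_of_isClosed_isBounded
    (isClosed_le (by fun_prop) continuous_const) ?_
  refine (Metric.isBounded_iff_subset_closedBall 0).mpr
    ⟨√(1 + R) * ‖(1 : Matrix (Fin n) (Fin n) ℝ)‖, fun Z hZ => ?_⟩
  rw [Metric.mem_closedBall, dist_zero_right]
  calc ‖Z‖ = ‖Z * 1‖ := by rw [Matrix.mul_one]
    _ ≤ specNorm Z * ‖(1 : Matrix (Fin n) (Fin n) ℝ)‖ := frobenius_norm_mul_le_specNorm_mul Z 1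
    _ ≤ _ := by gcongr; exact specNorm_le_sqrt_one_add hZ

lemma specNorm_le_sSup_image (hZ : ‖Zᵀ * Z - 1‖ ≤ R) :
    specNorm Z ≤ sSup (specNorm '' {W : Matrix (Fin m) (Fin n) ℝ | ‖Wᵀ * W - 1‖ ≤ R}) :=
  le_csSup ⟨√(1 + R), by rintro _ ⟨W, hW, rfl⟩; exact specNorm_le_sqrt_one_add hW⟩ ⟨Z, hZ, rfl⟩

lemma norm_le_sSup_image_of_continuous {E : Type*} [SeminormedAddCommGroup E]
    {g : Matrix (Fin m) (Fin n) ℝ → E} (hg : Continuous g) (hZ : ‖Zᵀ * Z - 1‖ ≤ R) :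
    ‖g Z‖ ≤ sSup ((fun W => ‖g W‖) '' {W : Matrix (Fin m) (Fin n) ℝ | ‖Wᵀ * W - 1‖ ≤ R}) :=
  le_csSup (isCompact_setOf_norm_transpose_mul_self_sub_one_le.image hg.norm).bddAbove
    ⟨Z, hZ, rfl⟩

end ConstraintSet

lemma continuous_of_fderiv_eq_trace {m n : Type*} [Fintype m] [Fintype n] [DecidableEq m]
    [DecidableEq n] {f : Matrix m n ℝ → ℝ} {g : Matrix m n ℝ → Matrix m n ℝ} (hf : ContDiff ℝ 1 f)
    (hg : ∀ Z H, fderiv ℝ f Z H = trace ((g Z)ᵀ * H)) : Continuous g := by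
  have hentry : ∀ Z i j, g Z i j = fderiv ℝ f Z (single i j 1) := fun Z i j => by
    simp [hg, trace_mul_single]
  refine continuous_matrix fun i j => ?_
  simp_rw [hentry]
  exact (hf.continuous_fderiv one_ne_zero).clm_apply continuous_const

section PLAMStep

variable {m n : Type*} [Fintype m] [Fintype n] [DecidableEq n]

noncomputable def plamMultiplier (Z G : Matrix m n ℝ) : Matrix n n ℝ :=
  (1 / 2 : ℝ) • (Gᵀ * Z + Zᵀ * G)

noncomputable def lagrangianGrad (β : ℝ) (Z G : Matrix m n ℝ) : Matrix m n ℝ :=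
  G - Z * plamMultiplier Z G + β • (Z * (Zᵀ * Z - 1))

lemma transpose_mul_self_sub_one_sub_smul_lagrangianGrad (Z G : Matrix m n ℝ) (β t : ℝ) :
    (Z - t • lagrangianGrad β Z G)ᵀ * (Z - t • lagrangianGrad β Z G) - 1 =
      (1 - 2 * t * β) • (Zᵀ * Z - 1) - (2 * t * β) • ((Zᵀ * Z - 1) * (Zᵀ * Z - 1)) +
      t • ((Zᵀ * Z - 1) * plamMultiplier Z G + plamMultiplier Z G * (Zᵀ * Z - 1)) +
      (t * t) • ((lagrangianGrad β Z G)ᵀ * lagrangianGrad β Z G) := by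
  simp only [lagrangianGrad, plamMultiplier, transpose_sub, transpose_add, transpose_smul,
    transpose_mul, transpose_transpose, Matrix.sub_mul, Matrix.mul_sub,
    Matrix.add_mul, Matrix.mul_add, Matrix.smul_mul, Matrix.mul_smul, smul_smul, smul_sub,
    smul_add, Matrix.mul_one, Matrix.one_mul, Matrix.mul_assoc]
  module

lemma norm_transpose_mul_self_sub_one_sub_smul_lagrangianGrad_le (Z G : Matrix m n ℝ)
    {β t : ℝ} (hβ : 0 ≤ β) (ht : 0 ≤ t) (htβ : 2 * t * β ≤ 1) :
    ‖(Z - t • lagrangianGrad β Z G)ᵀ * (Z - t • lagrangianGrad β Z G) - 1‖ ≤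
      (1 - 2 * t * β) * ‖Zᵀ * Z - 1‖ + 2 * t * β * ‖Zᵀ * Z - 1‖ ^ 2 +
      2 * t * ‖Zᵀ * Z - 1‖ * ‖plamMultiplier Z G‖ + t ^ 2 * ‖lagrangianGrad β Z G‖ ^ 2 := by
  rw [transpose_mul_self_sub_one_sub_smul_lagrangianGrad]
  set S := Zᵀ * Z - 1
  set Λ := plamMultiplier Z G
  set D := lagrangianGrad β Z G
  have h2tβ : 0 ≤ 2 * t * β := by positivity
  have hSS : ‖S * S‖ ≤ ‖S‖ ^ 2 := sq ‖S‖ ▸ frobenius_norm_mul S S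
  have hSΛ : ‖S * Λ + Λ * S‖ ≤ 2 * ‖S‖ * ‖Λ‖ := by
    linarith [norm_add_le (S * Λ) (Λ * S), frobenius_norm_mul S Λ, frobenius_norm_mul Λ S]
  have hDD : ‖Dᵀ * D‖ ≤ ‖D‖ ^ 2 := by
    simpa only [frobenius_norm_transpose, sq] using frobenius_norm_mul Dᵀ D
  calc _ ≤ ‖(1 - 2 * t * β) • S‖ + ‖(2 * t * β) • (S * S)‖ + ‖t • (S * Λ + Λ * S)‖ +
        ‖(t * t) • (Dᵀ * D)‖ := by
          have := norm_sub_le ((1 - 2 * t * β) • S) ((2 * t * β) • (S * S))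
          linarith [norm_add_le ((1 - 2 * t * β) • S - (2 * t * β) • (S * S) +
            t • (S * Λ + Λ * S)) ((t * t) • (Dᵀ * D)), norm_add_le ((1 - 2 * t * β) • S -
            (2 * t * β) • (S * S)) (t • (S * Λ + Λ * S))]
    _ ≤ _ := by
      simp only [norm_smul, Real.norm_eq_abs, abs_of_nonneg ht, abs_of_nonneg (sub_nonneg.2 htβ),
        abs_of_nonneg h2tβ, abs_of_nonneg (mul_self_nonneg t)]
      linarith [mul_le_mul_of_nonneg_left hSS h2tβ, mul_le_mul_of_nonneg_left hSΛ ht,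
        mul_le_mul_of_nonneg_left hDD (mul_self_nonneg t)]

end PLAMStep

section PLAMStepBounds

variable {m n : ℕ}

lemma norm_plamMultiplier_le (Z G : Matrix (Fin m) (Fin n) ℝ) :
    ‖plamMultiplier Z G‖ ≤ ‖G‖ * specNorm Z := by
  have h : ‖Gᵀ * Z‖ ≤ ‖G‖ * specNorm Z :=
    frobenius_norm_transpose G ▸ frobenius_norm_mul_le_mul_specNorm Gᵀ Z
  have hT : ‖Zᵀ * G‖ = ‖Gᵀ * Z‖ := by
    rw [← frobenius_norm_transpose, transpose_mul, transpose_transpose]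
  rw [plamMultiplier, norm_smul, Real.norm_of_nonneg (by norm_num)]
  linarith [norm_add_le (Gᵀ * Z) (Zᵀ * G)]

lemma norm_lagrangianGrad_le (Z G : Matrix (Fin m) (Fin n) ℝ) {β : ℝ} (hβ : 0 ≤ β) :
    ‖lagrangianGrad β Z G‖ ≤
      ‖G‖ + specNorm Z * ‖plamMultiplier Z G‖ + β * (specNorm Z * ‖Zᵀ * Z - 1‖) := by
  rw [lagrangianGrad]
  calc _ ≤ ‖G - Z * plamMultiplier Z G‖ + ‖β • (Z * (Zᵀ * Z - 1))‖ := norm_add_le _ _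
    _ ≤ ‖G‖ + ‖Z * plamMultiplier Z G‖ + β * ‖Z * (Zᵀ * Z - 1)‖ := by
      rw [norm_smul, Real.norm_of_nonneg hβ]
      gcongr
      exact norm_sub_le _ _
    _ ≤ _ := by
      gcongr <;> exact frobenius_norm_mul_le_specNorm_mul _ _

lemma norm_transpose_mul_self_sub_one_plamStep_le {Z G : Matrix (Fin m) (Fin n) ℝ}
    {R M N β η : ℝ} (hZ : ‖Zᵀ * Z - 1‖ ≤ R) (hZM : specNorm Z ≤ M) (hG : ‖G‖ ≤ N)
    (hβ : 0 < β) (hη : 2 * β ≤ η)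
    (hηNL : ((1 + M ^ 2) * N + β * R * M) ^ 2 ≤ 2 * R * (β * (1 - R) - M * N) * η) :
    ‖(Z - (1 / η) • lagrangianGrad β Z G)ᵀ * (Z - (1 / η) • lagrangianGrad β Z G) - 1‖ ≤ R := by
  have hη0 : 0 < η := by linarith
  set t := 1 / η with ht_def
  set s := ‖Zᵀ * Z - 1‖
  set NL := (1 + M ^ 2) * N + β * R * M
  have ht : 0 < t := by positivity
  have htβ : 2 * t * β ≤ 1 := by
    rw [show 2 * t * β = 2 * β / η by ring, div_le_one hη0]; exact hη
  have htNL : t * NL ^ 2 ≤ 2 * R * (β * (1 - R) - M * N) := by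
    rw [ht_def, one_div, inv_mul_le_iff₀ hη0]; linarith
  have hs : 0 ≤ s := norm_nonneg _
  have hM : 0 ≤ M := (specNorm_nonneg_s9 Z).trans hZM
  have hΛ : ‖plamMultiplier Z G‖ ≤ M * N := by
    nlinarith [norm_plamMultiplier_le Z G, norm_nonneg G]
  have hN : 0 ≤ N := (norm_nonneg G).trans hG
  have hR : 0 ≤ R := hs.trans hZ
  have hD : ‖lagrangianGrad β Z G‖ ≤ NL :=
    calc _ ≤ _ := norm_lagrangianGrad_le Z G hβ.le
      _ ≤ N + M * (M * N) + β * (M * R) := by gcongr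
      _ = NL := by ring
  have hcoef : 0 ≤ 1 - 2 * t * β + 2 * t * β * R + 2 * t * (M * N) := by
    nlinarith [mul_nonneg (mul_nonneg ht.le hβ.le) hR, mul_nonneg ht.le (mul_nonneg hM hN)]
  calc _ ≤ (1 - 2 * t * β) * s + 2 * t * β * s ^ 2 + 2 * t * s * ‖plamMultiplier Z G‖ +
        t ^ 2 * ‖lagrangianGrad β Z G‖ ^ 2 :=
        norm_transpose_mul_self_sub_one_sub_smul_lagrangianGrad_le Z G hβ.le ht.le htβ
    _ ≤ (1 - 2 * t * β + 2 * t * β * R + 2 * t * (M * N)) * s + t * (t * NL ^ 2) := by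
        have h2tβs : 0 ≤ 2 * t * β * s := by positivity
        linarith [mul_le_mul_of_nonneg_left hZ h2tβs,
          mul_le_mul_of_nonneg_left hΛ (by positivity : 0 ≤ 2 * t * s),
          mul_le_mul_of_nonneg_left (pow_le_pow_left₀ (norm_nonneg _) hD 2) (sq_nonneg t)]
    _ ≤ (1 - 2 * t * β + 2 * t * β * R + 2 * t * (M * N)) * R +
        t * (2 * R * (β * (1 - R) - M * N)) := by gcongr
    _ = R := by ring

lemma norm_transpose_mul_self_sub_one_plamIterate_le
    {g : Matrix (Fin m) (Fin n) ℝ → Matrix (Fin m) (Fin n) ℝ}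
    {X : ℕ → Matrix (Fin m) (Fin n) ℝ} {η : ℕ → ℝ} {R M N β : ℝ}
    (hM : ∀ Z : Matrix (Fin m) (Fin n) ℝ, ‖Zᵀ * Z - 1‖ ≤ R → specNorm Z ≤ M)
    (hN : ∀ Z : Matrix (Fin m) (Fin n) ℝ, ‖Zᵀ * Z - 1‖ ≤ R → ‖g Z‖ ≤ N) (hβ : 0 < β)
    (hη : ∀ k, 2 * β ≤ η k ∧
      ((1 + M ^ 2) * N + β * R * M) ^ 2 ≤ 2 * R * (β * (1 - R) - M * N) * η k)
    (hX0 : ‖(X 0)ᵀ * X 0 - 1‖ ≤ R)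
    (hrec : ∀ k, X (k + 1) = X k - (1 / η k) • lagrangianGrad β (X k) (g (X k))) :
    ∀ k, ‖(X k)ᵀ * X k - 1‖ ≤ R := by
  intro k
  induction k with
  | zero => exact hX0
  | succ k ih =>
    rw [hrec]
    exact norm_transpose_mul_self_sub_one_plamStep_le ih (hM _ ih) (hN _ ih) hβ (hη k).1 (hη k).2

end PLAMStepBounds

lemma plam_stepsize_bounds {R σ M N β c₂ η : ℝ} (hR : 0 < R) (hRσ : R ≤ 1 - σ ^ 2) (hσ : 0 < σ)
    (hM : √(1 - R) ≤ M) (hN : 0 ≤ N) (hβ : 4 * M * N / σ ^ 2 < β) (hc₂ : 0 < c₂)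
    (hc₂le : c₂ ≤ R ^ 2 * (β * σ ^ 2 - 4 * M * N) / (2 * ((1 + M ^ 2) * N + β * R * M) ^ 2))
    (hη : (R + 2 * M ^ 2) / c₂ ≤ η) :
    2 * β ≤ η ∧ ((1 + M ^ 2) * N + β * R * M) ^ 2 ≤ 2 * R * (β * (1 - R) - M * N) * η := by
  set NL := (1 + M ^ 2) * N + β * R * M
  have hM0 : 0 ≤ M := (Real.sqrt_nonneg _).trans hM
  have hM2 : 1 - R ≤ M ^ 2 := (Real.sqrt_le_left hM0).mp hM
  have hMN : 0 ≤ M * N := mul_nonneg hM0 hN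
  have hβσ : 4 * M * N < β * σ ^ 2 := (div_lt_iff₀ (by positivity)).mp hβ
  have hβ0 : 0 < β := by nlinarith
  have hNL : 0 < NL ^ 2 := by
    -- otherwise the bound on `c₂` reads `c₂ ≤ x / 0 = 0`
    refine (sq_nonneg NL).lt_of_ne fun h => ?_
    rw [← h, mul_zero, div_zero] at hc₂le
    linarith
  have hc₂NL : c₂ * (2 * NL ^ 2) ≤ R ^ 2 * (β * σ ^ 2 - 4 * M * N) :=
    (le_div_iff₀ (by positivity)).mp hc₂le
  have hηc₂ : R + 2 * M ^ 2 ≤ η * c₂ := (div_le_iff₀ hc₂).mp hη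
  constructor
  · have hc₂M : 2 * c₂ * β * M ^ 2 ≤ σ ^ 2 := by
      have hβRM : (β * R * M) ^ 2 ≤ NL ^ 2 :=
        pow_le_pow_left₀ (by positivity) (by nlinarith) 2
      have : R ^ 2 * β * (2 * c₂ * β * M ^ 2) ≤ R ^ 2 * β * σ ^ 2 := by nlinarith
      exact le_of_mul_le_mul_left this (by positivity)
    have hc₂β : 2 * β * c₂ ≤ 1 :=
      le_of_mul_le_mul_right (by linarith : 2 * β * c₂ * M ^ 2 ≤ 1 * M ^ 2) (by nlinarith)
    nlinarith
  · have hgap : β * σ ^ 2 - M * N ≤ β * (1 - R) - M * N := by nlinarith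
    have hRη : R ≤ η * c₂ := by nlinarith [sq_nonneg M]
    refine le_of_mul_le_mul_right ?_ hc₂
    nlinarith [mul_le_mul_of_nonneg_left hRη (by nlinarith : 0 ≤ 2 * R * (β * (1 - R) - M * N))]

theorem stmt9_general {n p : ℕ}
    -- `f` twice continuously differentiable, `g` its gradient
    (f : Matrix (Fin n) (Fin p) ℝ → ℝ)
    (g : Matrix (Fin n) (Fin p) ℝ → Matrix (Fin n) (Fin p) ℝ)
    (hf : ContDiff ℝ 2 f)
    (hg : ∀ Z H, fderiv ℝ f Z H = Matrix.trace ((g Z)ᵀ * H))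
    -- initial point and Assumption A2
    (X0 : Matrix (Fin n) (Fin p) ℝ) (σ : ℝ)
    (hσ : 0 < σ ∧ σ < 1)
    (hA2 : σ ≤ sigmaMin X0 ∧ 0 < ‖X0ᵀ * X0 - 1‖ ∧ ‖X0ᵀ * X0 - 1‖ ≤ 1 - σ ^ 2)
    -- the constants `R, C, M, N, L, N_L` of the paper
    (β c₁ c₂ Lh ηlo ηhi : ℝ) (η : ℕ → ℝ)
    (R M N L NL : ℝ)
    (hR : R = ‖X0ᵀ * X0 - 1‖)
    (hM : M = sSup (specNorm '' {Z : Matrix (Fin n) (Fin p) ℝ | ‖Zᵀ * Z - 1‖ ≤ R}))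
    (hN : N = sSup ((fun Z => ‖g Z‖) '' {Z : Matrix (Fin n) (Fin p) ℝ | ‖Zᵀ * Z - 1‖ ≤ R}))
    (hNL : NL = (1 + M ^ 2) * N + β * R * M)
    -- Assumption A3
    (hβ : β > max (M * N / σ ^ 2 +
        Real.sqrt (M ^ 2 * N ^ 2 / σ ^ 4 + (N + L * M) ^ 2 / (4 * σ ^ 2 * (1 - 2 * c₁))))
      (max (M * N / σ) (4 * M * N / σ ^ 2)))
    (hc2 : 0 < c₂ ∧ c₂ ≤ R ^ 2 * (β * σ ^ 2 - 4 * M * N) / (2 * NL ^ 2))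
    (hηlo : ηlo = max (Lh / (2 * c₁))
      (max ((2 * NL * M + NL * Real.sqrt (4 * M ^ 2 + 2 * R)) / R) ((R + 2 * M ^ 2) / c₂)))
    (hη : ∀ k, ηlo ≤ η k ∧ η k ≤ ηhi)
    -- the gradient of the augmented Lagrangian with multiplier `Λ = Ψ(∇f(X)ᵀX)`
    (gL : Matrix (Fin n) (Fin p) ℝ → Matrix (Fin n) (Fin p) ℝ)
    (hgL : ∀ Z, gL Z = g Z - Z * ((1 / 2 : ℝ) • ((g Z)ᵀ * Z + Zᵀ * g Z)) +
      β • (Z * (Zᵀ * Z - 1)))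
    -- the PLAM iterates
    (X : ℕ → Matrix (Fin n) (Fin p) ℝ)
    (hX0 : X 0 = X0)
    (hrec : ∀ k, X (k + 1) = X k - (1 / η k) • gL (X k))
    :
    ∀ k, σ ≤ sigmaMin (X k) ∧ ‖(X k)ᵀ * X k - 1‖ ≤ R := by
  obtain ⟨hσ0, -⟩ := hσ
  obtain ⟨-, hR0, hRσ⟩ := hA2
  have : NeZero p := ⟨by
    rintro rfl
    exact hR0.ne' (by rw [Subsingleton.elim (X0ᵀ * X0 - 1) 0, norm_zero])⟩
  rw [← hR] at hR0 hRσ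
  have hX0C : ‖X0ᵀ * X0 - 1‖ ≤ R := hR.ge
  have hgN : ∀ Z : Matrix (Fin n) (Fin p) ℝ, ‖Zᵀ * Z - 1‖ ≤ R → ‖g Z‖ ≤ N := fun Z hZ =>
    hN ▸ norm_le_sSup_image_of_continuous
      (continuous_of_fderiv_eq_trace (hf.of_le (by norm_num)) hg) hZ
  have hZM : ∀ Z : Matrix (Fin n) (Fin p) ℝ, ‖Zᵀ * Z - 1‖ ≤ R → specNorm Z ≤ M :=
    fun Z hZ => hM ▸ specNorm_le_sSup_image hZ
  have hM1 : √(1 - R) ≤ M := (sqrt_one_sub_le_specNorm hX0C).trans (hZM X0 hX0C)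
  have hN0 : 0 ≤ N := (norm_nonneg _).trans (hgN X0 hX0C)
  have hβσ : 4 * M * N / σ ^ 2 < β := ((le_max_right _ _).trans (le_max_right _ _)).trans_lt hβ
  have hM0 : 0 ≤ M := (Real.sqrt_nonneg _).trans hM1
  have hβ0 : 0 < β :=
    (div_nonneg (mul_nonneg (mul_nonneg zero_le_four hM0) hN0) (sq_nonneg σ)).trans_lt hβσ
  subst hNL
  have hinv := norm_transpose_mul_self_sub_one_plamIterate_le hZM hgN hβ0
    (fun k => plam_stepsize_bounds hR0 hRσ hσ0 hM1 hN0 hβσ hc2.1 hc2.2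
      (((le_max_right _ _).trans (le_max_right _ _)).trans (hηlo ▸ (hη k).1)))
    (hX0 ▸ hX0C) (fun k => by rw [hrec, hgL]; rfl)
  refine fun k => ⟨?_, hinv k⟩
  exact ((Real.le_sqrt hσ0.le (by linarith [sq_nonneg σ])).mpr (by linarith)).trans
    (sqrt_one_sub_le_sigmaMin (hinv k))

/-- Lemma 3 of the paper: under Assumptions A2 and A3, the PLAM
iterates satisfy `σ_min(X^k) ≥ σ̲` and `‖X^kᵀX^k − I_p‖_F ≤ R` for every `k`. -/
theorem stmt9 {n p : ℕ}
    -- `f` twice continuously differentiable, `g` its gradient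
    (f : Matrix (Fin n) (Fin p) ℝ → ℝ)
    (g : Matrix (Fin n) (Fin p) ℝ → Matrix (Fin n) (Fin p) ℝ)
    (hf : ContDiff ℝ 2 f)
    (hg : ∀ Z H, fderiv ℝ f Z H = Matrix.trace ((g Z)ᵀ * H))
    -- initial point and Assumption A2
    (X0 : Matrix (Fin n) (Fin p) ℝ) (σ : ℝ)
    (hσ : 0 < σ ∧ σ < 1)
    (hA2 : σ ≤ sigmaMin X0 ∧ 0 < ‖X0ᵀ * X0 - 1‖ ∧ ‖X0ᵀ * X0 - 1‖ ≤ 1 - σ ^ 2)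
    -- the constants `R, C, M, N, L, N_L` of the paper
    (β c₁ c₂ Lh ηlo ηhi : ℝ) (η : ℕ → ℝ)
    (R M N L NL : ℝ)
    (hR : R = ‖X0ᵀ * X0 - 1‖)
    (hM : M = sSup (specNorm '' {Z : Matrix (Fin n) (Fin p) ℝ | ‖Zᵀ * Z - 1‖ ≤ R}))
    (hN : N = sSup ((fun Z => ‖g Z‖) '' {Z : Matrix (Fin n) (Fin p) ℝ | ‖Zᵀ * Z - 1‖ ≤ R}))
    (hL : L = sSup ((fun Z => @Norm.norm _ ContinuousLinearMap.hasOpNorm (fderiv ℝ g Z)) ''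
      {Z : Matrix (Fin n) (Fin p) ℝ | ‖Zᵀ * Z - 1‖ ≤ R}))
    (hNL : NL = (1 + M ^ 2) * N + β * R * M)
    -- the merit function `h` and a Lipschitz constant `L_h` of `∇h` on `C`
    (hfn : Matrix (Fin n) (Fin p) ℝ → ℝ)
    (hhfn : ∀ Z, hfn Z = f Z -
        (1 / 2) * Matrix.trace (((1 / 2 : ℝ) • ((g Z)ᵀ * Z + Zᵀ * g Z))ᵀ * (Zᵀ * Z - 1)) +
        (β / 4) * ‖Zᵀ * Z - 1‖ ^ 2)
    (hLh : 0 < Lh)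
    (hLhLip : ∀ Z W : Matrix (Fin n) (Fin p) ℝ, ‖Zᵀ * Z - 1‖ ≤ R → ‖Wᵀ * W - 1‖ ≤ R →
      @Norm.norm _ ContinuousLinearMap.hasOpNorm (fderiv ℝ hfn Z - fderiv ℝ hfn W) ≤ Lh * ‖Z - W‖)
    -- Assumption A3
    (hc1 : 0 < c₁ ∧ c₁ < 1 / 2)
    (hβ : β > max (M * N / σ ^ 2 +
        Real.sqrt (M ^ 2 * N ^ 2 / σ ^ 4 + (N + L * M) ^ 2 / (4 * σ ^ 2 * (1 - 2 * c₁))))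
      (max (M * N / σ) (4 * M * N / σ ^ 2)))
    (hc2 : 0 < c₂ ∧ c₂ ≤ R ^ 2 * (β * σ ^ 2 - 4 * M * N) / (2 * NL ^ 2))
    (hηlo : ηlo = max (Lh / (2 * c₁))
      (max ((2 * NL * M + NL * Real.sqrt (4 * M ^ 2 + 2 * R)) / R) ((R + 2 * M ^ 2) / c₂)))
    (hηhi : ηlo ≤ ηhi)
    (hη : ∀ k, ηlo ≤ η k ∧ η k ≤ ηhi)
    -- the gradient of the augmented Lagrangian with multiplier `Λ = Ψ(∇f(X)ᵀX)`
    (gL : Matrix (Fin n) (Fin p) ℝ → Matrix (Fin n) (Fin p) ℝ)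
    (hgL : ∀ Z, gL Z = g Z - Z * ((1 / 2 : ℝ) • ((g Z)ᵀ * Z + Zᵀ * g Z)) +
      β • (Z * (Zᵀ * Z - 1)))
    -- the PLAM iterates
    (X : ℕ → Matrix (Fin n) (Fin p) ℝ)
    (hX0 : X 0 = X0)
    (hrec : ∀ k, X (k + 1) = X k - (1 / η k) • gL (X k))
    :
    ∀ k, σ ≤ sigmaMin (X k) ∧ ‖(X k)ᵀ * X k - 1‖ ≤ R :=
  stmt9_general f g hf hg X0 σ hσ hA2 β c₁ c₂ Lh ηlo ηhi η R M N L NL hR hM hN hNL hβ hc2 hηlo hη gL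
    hgL X hX0 hrec
end
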